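/- arXiv:1911.02246 — 5 statements merged into one kernel-verified Lean document; each statement's English description precedes it below -/
import Mathlib

section
/- Let f : E → ℝ be convex and Gâteaux differentiable. If x₁, …, x_N ∈ E, t₁, …, t_N ∈ (0,1) with Σ tᵢ = 1, and z ∈ E, and if x̄ ∈ E satisfies ∇f(x̄) = Σ tᵢ ∇f(xᵢ), then D_f(z, x̄) ≤ Σ tᵢ D_f(z, xᵢ). -/
open scoped BigOperators

lemma subgradient_ineq
    {E : Type*} [NormedAddCommGroup E] [NormedSpace ℝ E]
    (f : E → ℝ) (f' : E → E →L[ℝ] ℝ)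
    (hconv : ConvexOn ℝ Set.univ f)
    (hgateaux : ∀ y v : E, HasDerivAt (fun t : ℝ => f (y + t • v)) (f' y v) 0)
    (y w : E) : f' y (w - y) ≤ f w - f y := by
  set g : ℝ → ℝ := fun t => f (y + t • (w - y)) with hg
  have hgc : ConvexOn ℝ Set.univ g := by
    have := hconv.comp_affineMap (AffineMap.lineMap y w : ℝ →ᵃ[ℝ] E)
    have heq : (f ∘ (AffineMap.lineMap y w : ℝ →ᵃ[ℝ] E)) = g := by
      funext t
      simp [g, AffineMap.lineMap_apply]
      congr 1
      abel
    rw [heq] at this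
    simpa using this
  have h := hgc.le_slope_of_hasDerivAt (Set.mem_univ (0:ℝ)) (Set.mem_univ (1:ℝ))
    one_pos (hgateaux y (w - y))
  have hs : slope g 0 1 = f w - f y := by
    simp [slope, g]
  rw [hs] at h
  exact h

/-- Joint convexity inequality: if `∇f(x̄) = Σ tᵢ ∇f(xᵢ)` with `tᵢ ∈ (0,1)`
summing to `1`, then `D_f(z, x̄) ≤ Σ tᵢ D_f(z, xᵢ)`. -/
theorem bregman_distance_convex_combination
    {E : Type*} [NormedAddCommGroup E] [NormedSpace ℝ E]
    (f : E → ℝ) (f' : E → E →L[ℝ] ℝ)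
    (hconv : ConvexOn ℝ Set.univ f)
    (hgateaux : ∀ y v : E, HasDerivAt (fun t : ℝ => f (y + t • v)) (f' y v) 0)
    (Df : E → E → ℝ) (hDf : ∀ x y, Df x y = f x - f y - f' y (x - y))
    (N : ℕ) (x : Fin N → E) (t : Fin N → ℝ)
    (ht : ∀ i, t i ∈ Set.Ioo (0 : ℝ) 1)
    (htsum : ∑ i, t i = 1)
    (z : E) (xbar : E)
    (hxbar : f' xbar = ∑ i, t i • f' (x i)) :
    Df z xbar ≤ ∑ i, t i * Df z (x i) := by
  have hsplit : ∀ i, (f' (x i)) (z - x i) = f' (x i) (z - xbar) + f' (x i) (xbar - x i) := by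
    intro i
    rw [← map_add]
    congr 1
    abel
  have hbound : ∑ i, t i * (f (x i) + f' (x i) (xbar - x i)) ≤ f xbar := by
    calc ∑ i, t i * (f (x i) + f' (x i) (xbar - x i))
        ≤ ∑ i, t i * f xbar := by
          refine Finset.sum_le_sum fun i _ => mul_le_mul_of_nonneg_left ?_ (ht i).1.le
          have := subgradient_ineq f f' hconv hgateaux (x i) xbar
          linarith
      _ = f xbar := by rw [← Finset.sum_mul, htsum, one_mul]
  have hlin : (f' xbar) (z - xbar) = ∑ i, t i * f' (x i) (z - xbar) := by
    rw [hxbar]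
    simp [ContinuousLinearMap.sum_apply, ContinuousLinearMap.smul_apply]
  have hexp : ∑ i, t i * Df z (x i)
      = f z - (∑ i, t i * (f (x i) + f' (x i) (xbar - x i)))
        - ∑ i, t i * f' (x i) (z - xbar) := by
    simp only [hDf, hsplit]
    rw [Finset.sum_congr rfl
      (fun i _ => by ring :
        ∀ i ∈ Finset.univ, t i * (f z - f (x i) - (f' (x i) (z - xbar) + f' (x i) (xbar - x i)))
          = t i * f z - t i * (f (x i) + f' (x i) (xbar - x i)) - t i * f' (x i) (z - xbar))]
    rw [Finset.sum_sub_distrib, Finset.sum_sub_distrib, ← Finset.sum_mul, htsum, one_mul]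
  rw [hDf, hexp, hlin]
  linarith
end

section
/- Let f : E → ℝ be convex, Legendre, and Gâteaux differentiable, and define V_f(x, x*) = f(x) - ⟨x*, x⟩ + f*(x*). Then V_f(x, x*) + ⟨y*, ∇f*(x*) - x⟩ ≤ V_f(x, x* + y*) for all x ∈ E and x*, y* ∈ E*. -/
/-- For a Legendre convex function `f` with Fenchel conjugate `fstar` and
`∇f* = gradfstar`, the function `V_f(x, x*) = f(x) - ⟨x*, x⟩ + f*(x*)`
satisfies `V_f(x, x*) + ⟨y*, ∇f*(x*) - x⟩ ≤ V_f(x, x* + y*)`. -/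
theorem Vf_subdifferential_inequality
    {E : Type*} [NormedAddCommGroup E] [NormedSpace ℝ E]
    (f : E → ℝ) (hconv : ConvexOn ℝ Set.univ f)
    (fstar : (E →L[ℝ] ℝ) → ℝ)
    (hfenchel_le : ∀ (p : E →L[ℝ] ℝ) (x : E), p x - f x ≤ fstar p)
    (gradfstar : (E →L[ℝ] ℝ) → E)
    (hfenchel_eq : ∀ p : E →L[ℝ] ℝ, fstar p = p (gradfstar p) - f (gradfstar p))
    (V : E → (E →L[ℝ] ℝ) → ℝ)
    (hV : ∀ x p, V x p = f x - p x + fstar p) :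
    ∀ (x : E) (xstar ystar : E →L[ℝ] ℝ),
      V x xstar + ystar (gradfstar xstar - x) ≤ V x (xstar + ystar) := by
  intro x xstar ystar
  have h1 := hfenchel_le (xstar + ystar) (gradfstar xstar)
  have h2 := hfenchel_eq xstar
  simp only [hV, ContinuousLinearMap.add_apply, map_sub] at *
  linarith
end

section
/- Let C be a nonempty closed convex subset of int(dom f) and T : C → C a quasi-Bregman nonexpansive mapping with respect to a Gâteaux differentiable strictly convex function f (i.e., F(T) ≠ ∅ and D_f(p, Tx) ≤ D_f(p, x) for all x ∈ C, p ∈ F(T)). Then the fixed point set F(T) is convex. -/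
/-- Strict gradient inequality for a strictly convex Gâteaux differentiable function. -/
lemma strict_grad_ineq
    {E : Type*} [NormedAddCommGroup E] [NormedSpace ℝ E]
    (f : E → ℝ) (f' : E → E →L[ℝ] ℝ)
    (hconv : StrictConvexOn ℝ Set.univ f)
    (hgateaux : ∀ y v : E, HasDerivAt (fun t : ℝ => f (y + t • v)) (f' y v) 0)
    {y z : E} (hne : z ≠ y) : f y + f' y (z - y) < f z := by
  set v := z - y with hv
  have hv0 : v ≠ 0 := sub_ne_zero.mpr hne
  set φ : ℝ → ℝ := fun t => f (y + t • v) with hφ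
  have hφconv : StrictConvexOn ℝ (Set.univ : Set ℝ) φ := by
    refine ⟨convex_univ, ?_⟩
    intro s _ t _ hst a b ha hb hab
    have hne' : y + s • v ≠ y + t • v := by
      intro h
      apply hst
      have := add_left_cancel h
      exact smul_left_injective ℝ hv0 this
    have := hconv.2 (Set.mem_univ (y + s • v)) (Set.mem_univ (y + t • v)) hne' ha hb hab
    calc φ (a * s + b * t) = f (a • (y + s • v) + b • (y + t • v)) := by
          simp only [hφ]; congr 1
          rw [smul_add, smul_add, smul_smul, smul_smul]
          rw [add_add_add_comm, ← add_smul, hab, one_smul, add_smul]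
      _ < a * f (y + s • v) + b * f (y + t • v) := this
      _ = a • φ s + b • φ t := rfl
  have hd : HasDerivAt φ (f' y v) 0 := hgateaux y v
  have := hφconv.lt_slope_of_hasDerivAt (Set.mem_univ 0) (Set.mem_univ 1) one_pos hd
  rw [slope_def_field] at this
  simp only [hφ, zero_smul, add_zero, one_smul] at this
  have hz : y + v = z := by rw [hv]; abel
  rw [hz] at this
  rw [sub_zero, div_one] at this
  linarith
/-- The fixed point set of a quasi-Bregman nonexpansive mapping with respect
to a strictly convex Gâteaux differentiable function is convex. -/
theorem fixedPointSet_quasiBregman_convex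
    {E : Type*} [NormedAddCommGroup E] [NormedSpace ℝ E]
    (f : E → ℝ) (f' : E → E →L[ℝ] ℝ)
    (hconv : StrictConvexOn ℝ Set.univ f)
    (hgateaux : ∀ y v : E, HasDerivAt (fun t : ℝ => f (y + t • v)) (f' y v) 0)
    (Df : E → E → ℝ) (hDf : ∀ x y, Df x y = f x - f y - f' y (x - y))
    (C : Set E) (hC : C.Nonempty) (hCclosed : IsClosed C) (hCconv : Convex ℝ C)
    (T : E → E) (hT : Set.MapsTo T C C)
    (hF : {p ∈ C | T p = p}.Nonempty)
    (hquasi : ∀ x ∈ C, ∀ p ∈ C, T p = p → Df p (T x) ≤ Df p x) :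
    Convex ℝ {p ∈ C | T p = p} := by
  intro p hp q hq a b ha hb hab
  obtain ⟨hpC, hpT⟩ := hp
  obtain ⟨hqC, hqT⟩ := hq
  set z := a • p + b • q with hz
  have hzC : z ∈ C := hCconv hpC hqC ha hb hab
  refine ⟨hzC, ?_⟩
  -- key combined inequality
  have h1 := hquasi z hzC p hpC hpT
  have h2 := hquasi z hzC q hqC hqT
  rw [hDf, hDf] at h1 h2
  by_contra hTz
  have key : f z ≤ f (T z) + f' (T z) (z - T z) := by
    have comb : a * (f p - f (T z) - f' (T z) (p - T z)) + b * (f q - f (T z) - f' (T z) (q - T z))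
        ≤ a * (f p - f z - f' z (p - z)) + b * (f q - f z - f' z (q - z)) := by
      nlinarith [mul_le_mul_of_nonneg_left h1 ha, mul_le_mul_of_nonneg_left h2 hb]
    have e1 : a • (p - T z) + b • (q - T z) = z - T z := by
      rw [hz, smul_sub, smul_sub, sub_add_sub_comm, ← add_smul, hab, one_smul]
    have e2 : a • (p - z) + b • (q - z) = 0 := by
      rw [smul_sub, smul_sub, sub_add_sub_comm, ← add_smul, hab, one_smul, ← hz, sub_self]
    have m1 : a * f' (T z) (p - T z) + b * f' (T z) (q - T z) = f' (T z) (z - T z) := by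
      rw [← e1]; simp [map_add, map_smul]
    have m2 : a * f' z (p - z) + b * f' z (q - z) = 0 := by
      have : f' z (a • (p - z) + b • (q - z)) = 0 := by rw [e2]; simp
      simpa [map_add, map_smul] using this
    have hx1 : a * f (T z) + b * f (T z) = f (T z) := by rw [← add_mul, hab, one_mul]
    have hx2 : a * f z + b * f z = f z := by rw [← add_mul, hab, one_mul]
    nlinarith [comb, m1, m2, hx1, hx2]
  have := strict_grad_ineq f f' hconv hgateaux (y := T z) (z := z) (fun h => hTz h.symm)
  linarith
end

section
/- Let f : E → ℝ be Gâteaux differentiable and totally convex, C ⊆ E nonempty closed convex, and x ∈ E. If z ∈ C satisfies ⟨∇f(x) - ∇f(z), y - z⟩ ≤ 0 for all y ∈ C, then D_f(y, z) + D_f(z, x) ≤ D_f(y, x) for all y ∈ C. -/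
/-- If `z ∈ C` satisfies the variational inequality
`⟨∇f(x) - ∇f(z), y - z⟩ ≤ 0` for all `y ∈ C`, then
`D_f(y, z) + D_f(z, x) ≤ D_f(y, x)` for all `y ∈ C`. -/
theorem bregman_projection_variational_to_distance
    {E : Type*} [NormedAddCommGroup E] [NormedSpace ℝ E]
    (f : E → ℝ) (f' : E → E →L[ℝ] ℝ)
    (hconv : ConvexOn ℝ Set.univ f)
    (hgateaux : ∀ y v : E, HasDerivAt (fun t : ℝ => f (y + t • v)) (f' y v) 0)
    (Df : E → E → ℝ) (hDf : ∀ x y, Df x y = f x - f y - f' y (x - y))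
    (C : Set E) (hC : C.Nonempty) (hCclosed : IsClosed C) (hCconv : Convex ℝ C)
    (x : E) (z : E) (hz : z ∈ C)
    (hvar : ∀ y ∈ C, f' x (y - z) - f' z (y - z) ≤ 0) :
    ∀ y ∈ C, Df y z + Df z x ≤ Df y x := by
  intro y hy
  have h := hvar y hy
  have key : f' x (y - x) = f' x (y - z) + f' x (z - x) := by
    rw [← map_add]; congr 1; abel
  rw [hDf, hDf, hDf, key]
  linarith
end

section
/- Let T be a Bregman firmly nonexpansive operator with respect to a strictly convex Gâteaux differentiable f, and suppose p is a fixed point of T. Then D_f(p, Tx) + D_f(Tx, x) ≤ D_f(p, x) for all x; in particular T is quasi-Bregman nonexpansive. -/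
/-- A Bregman firmly nonexpansive operator with a fixed point `p` satisfies
`D_f(p, Tx) + D_f(Tx, x) ≤ D_f(p, x)`; in particular it is quasi-Bregman
nonexpansive. -/
theorem bfne_quasiBregman
    {E : Type*} [NormedAddCommGroup E] [NormedSpace ℝ E]
    (f : E → ℝ) (f' : E → E →L[ℝ] ℝ)
    (hconv : StrictConvexOn ℝ Set.univ f)
    (hgateaux : ∀ y v : E, HasDerivAt (fun t : ℝ => f (y + t • v)) (f' y v) 0)
    (Df : E → E → ℝ) (hDf : ∀ x y, Df x y = f x - f y - f' y (x - y))
    (C : Set E) (T : E → E) (hT : Set.MapsTo T C C)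
    (hbfne : ∀ x ∈ C, ∀ y ∈ C,
      f' (T x) (T x - T y) - f' (T y) (T x - T y) ≤
        f' x (T x - T y) - f' y (T x - T y))
    (p : E) (hp : p ∈ C) (hfix : T p = p) :
    ∀ x ∈ C, Df p (T x) + Df (T x) x ≤ Df p x := by
  intro x hx
  have h := hbfne x hx p hp
  rw [hfix] at h
  simp only [hDf, map_sub] at *
  linarith
end
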